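/- Let W'_0 be a symmetric row-stochastic V × V real matrix all of whose eigenvalues lie in the interval [0,1], and let C ≥ 1 be an integer. Then there exists a symmetric real V × V matrix K, all of whose eigenvalues lie in [0,1] and each of whose rows sums to 1, such that (1/C) · Σ_{i=1}^{C} K^i = W'_0. -/
import Mathlib


/-- A row-stochastic matrix: nonnegative entries, each row sums to 1. -/
def RowStochastic {V : ℕ} (K : Matrix (Fin V) (Fin V) ℝ) : Prop :=
  (∀ i j, 0 ≤ K i j) ∧ ∀ i, ∑ j, K i j = 1

open Matrix in
/-- Let `W'₀` be a symmetric row-stochastic `V × V` real matrix all of whose eigenvalues lie in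
`[0,1]`, and let `C ≥ 1`.  Then there exists a symmetric real `V × V` matrix `K`, all of whose
eigenvalues lie in `[0,1]` and each of whose rows sums to 1, such that
`(1/C) · Σ_{i=1}^{C} K^i = W'₀`. -/
theorem exists_markov_kernel_of_symmetric_reference {V : ℕ} (C : ℕ) (hC : 1 ≤ C)
    (W'₀ : Matrix (Fin V) (Fin V) ℝ)
    (hsym : W'₀.IsSymm) (hstoch : RowStochastic W'₀)
    (hspec : spectrum ℝ W'₀ ⊆ Set.Icc (0 : ℝ) 1) :
    ∃ K : Matrix (Fin V) (Fin V) ℝ, K.IsSymm ∧ spectrum ℝ K ⊆ Set.Icc (0 : ℝ) 1 ∧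
      (∀ i, ∑ j, K i j = 1) ∧ (1 / (C : ℝ)) • ∑ i ∈ Finset.Icc 1 C, K ^ i = W'₀ := by
  classical
  have hH : W'₀.IsHermitian := by
    rwa [Matrix.IsHermitian, Matrix.conjTranspose_eq_transpose_of_trivial]
  have hCpos : (0:ℝ) < C := by exact_mod_cast hC
  set f : ℝ → ℝ := fun x => (1 / (C:ℝ)) * ∑ i ∈ Finset.Icc 1 C, x ^ i with hf
  have hf0 : f 0 = 0 := by
    have : ∀ i ∈ Finset.Icc 1 C, (0:ℝ) ^ i = 0 := by
      intro i hi
      exact zero_pow (Nat.one_le_iff_ne_zero.mp (Finset.mem_Icc.mp hi).1)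
    simp [hf, Finset.sum_congr rfl this]
  have hf1 : f 1 = 1 := by
    simp [hf]
    field_simp
  have hmono : StrictMonoOn f (Set.Icc (0:ℝ) 1) := by
    intro x hx y hy hxy
    have hsum : ∑ i ∈ Finset.Icc 1 C, x ^ i < ∑ i ∈ Finset.Icc 1 C, y ^ i := by
      apply Finset.sum_lt_sum
      · intro i _
        exact pow_le_pow_left₀ hx.1 hxy.le i
      · exact ⟨1, Finset.mem_Icc.mpr ⟨le_refl 1, hC⟩, by simpa using hxy⟩
    have h1C : (0:ℝ) < 1 / C := by positivity
    simpa [hf] using mul_lt_mul_of_pos_left hsum h1C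
  have hcont : Continuous f := by
    apply Continuous.mul continuous_const
    exact continuous_finset_sum _ fun i _ => continuous_pow i
  have hlam : ∀ i, hH.eigenvalues i ∈ Set.Icc (0:ℝ) 1 := fun i =>
    hspec (hH.eigenvalues_mem_spectrum_real i)
  have hexists : ∀ i : Fin V, ∃ m, m ∈ Set.Icc (0:ℝ) 1 ∧ f m = hH.eigenvalues i := by
    intro i
    have hmem : hH.eigenvalues i ∈ Set.Icc (f 0) (f 1) := by
      rw [hf0, hf1]; exact hlam i
    obtain ⟨m, hm1, hm2⟩ :=
      intermediate_value_Icc (by norm_num : (0:ℝ) ≤ 1) hcont.continuousOn hmem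
    exact ⟨m, hm1, hm2⟩
  choose μ hμmem hμf using hexists
  set U : Matrix (Fin V) (Fin V) ℝ := (hH.eigenvectorUnitary : Matrix (Fin V) (Fin V) ℝ) with hUdef
  have hU1 : U * star U = 1 := Unitary.coe_mul_star_self _
  have hU2 : star U * U = 1 := Unitary.coe_star_mul_self _
  set D : Matrix (Fin V) (Fin V) ℝ := Matrix.diagonal μ with hDdef
  have hspecth : W'₀ = U * Matrix.diagonal hH.eigenvalues * star U := by
    have := hH.spectral_theorem
    simpa [RCLike.ofReal_real_eq_id] using this
  set K : Matrix (Fin V) (Fin V) ℝ := U * D * star U with hKdef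
  have hconjpow : ∀ n : ℕ, K ^ n = U * D ^ n * star U := by
    intro n
    induction n with
    | zero => simp [hU1]
    | succ n ih =>
        rw [pow_succ, ih, hKdef]
        calc U * D ^ n * star U * (U * D * star U)
            = U * D ^ n * (star U * U) * D * star U := by
              simp only [Matrix.mul_assoc]
          _ = U * D ^ (n+1) * star U := by
              rw [hU2, Matrix.mul_one, pow_succ]
              simp only [Matrix.mul_assoc]
  refine ⟨K, ?_, ?_, ?_, ?_⟩
  · -- symmetry
    have hherm : K.IsHermitian := by
      rw [Matrix.IsHermitian, hKdef]
      rw [Matrix.conjTranspose_mul, Matrix.conjTranspose_mul]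
      rw [← Matrix.star_eq_conjTranspose, ← Matrix.star_eq_conjTranspose,
        ← Matrix.star_eq_conjTranspose, star_star]
      have hDstar : star D = D := by
        rw [Matrix.star_eq_conjTranspose, hDdef, Matrix.diagonal_conjTranspose]
        simp
      rw [hDstar, Matrix.mul_assoc]
    rwa [Matrix.IsSymm, ← Matrix.conjTranspose_eq_transpose_of_trivial]
  · -- spectrum
    have : spectrum ℝ K = spectrum ℝ D := by
      rw [hKdef, hUdef]
      have hu := spectrum.units_conjugate (R := ℝ) (a := D)
        (u := Unitary.toUnits hH.eigenvectorUnitary)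
      simp only [Unitary.toUnits] at hu
      exact hu
    rw [this, hDdef, spectrum_diagonal]
    rintro x ⟨i, rfl⟩
    exact hμmem i
  · -- row sums
    intro i
    have hones : W'₀ *ᵥ (fun _ => (1:ℝ)) = fun _ => (1:ℝ) := by
      funext j
      simp [Matrix.mulVec, dotProduct, hstoch.2 j]
    set w : Fin V → ℝ := star U *ᵥ (fun _ => (1:ℝ)) with hw
    have hlamw : Matrix.diagonal hH.eigenvalues *ᵥ w = w := by
      have e1 : star U * (U * Matrix.diagonal hH.eigenvalues * star U)
          = Matrix.diagonal hH.eigenvalues * star U := by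
        calc star U * (U * Matrix.diagonal hH.eigenvalues * star U)
            = (star U * U) * Matrix.diagonal hH.eigenvalues * star U := by
              simp only [Matrix.mul_assoc]
          _ = Matrix.diagonal hH.eigenvalues * star U := by rw [hU2, Matrix.one_mul]
      calc Matrix.diagonal hH.eigenvalues *ᵥ w
          = (Matrix.diagonal hH.eigenvalues * star U) *ᵥ (fun _ => (1:ℝ)) := by
            rw [hw, Matrix.mulVec_mulVec]
        _ = (star U * (U * Matrix.diagonal hH.eigenvalues * star U)) *ᵥ (fun _ => (1:ℝ)) := by
            rw [e1]
        _ = star U *ᵥ (W'₀ *ᵥ (fun _ => (1:ℝ))) := by rw [← hspecth, Matrix.mulVec_mulVec]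
        _ = w := by rw [hones]
    have hmuw : D *ᵥ w = w := by
      funext j
      have h1 := congrFun hlamw j
      rw [Matrix.mulVec_diagonal] at h1
      rw [hDdef, Matrix.mulVec_diagonal]
      by_cases hwj : w j = 0
      · simp [hwj]
      · have hl1 : hH.eigenvalues j = 1 := by
          have h2 : hH.eigenvalues j * w j = 1 * w j := by rw [h1, one_mul]
          exact mul_right_cancel₀ hwj h2
        have : μ j = 1 := by
          apply hmono.injOn (hμmem j) (Set.mem_Icc.mpr ⟨zero_le_one, le_refl 1⟩)
          rw [hμf j, hl1, hf1]
        rw [this, one_mul]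
    have hKones : K *ᵥ (fun _ => (1:ℝ)) = fun _ => (1:ℝ) := by
      rw [hKdef]
      rw [← Matrix.mulVec_mulVec, ← Matrix.mulVec_mulVec, ← hw, hmuw, hw,
        Matrix.mulVec_mulVec, hU1, Matrix.one_mulVec]
    have := congrFun hKones i
    simpa [Matrix.mulVec, dotProduct] using this
  · -- the averaging identity
    have hsum : ∑ i ∈ Finset.Icc 1 C, K ^ i
        = U * (∑ i ∈ Finset.Icc 1 C, D ^ i) * star U := by
      rw [Finset.sum_congr rfl (fun i _ => hconjpow i)]
      rw [← Finset.sum_mul, ← Finset.mul_sum]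
    rw [hsum]
    have hmove : (1 / (C:ℝ)) • (U * (∑ i ∈ Finset.Icc 1 C, D ^ i) * star U)
        = U * ((1 / (C:ℝ)) • ∑ i ∈ Finset.Icc 1 C, D ^ i) * star U := by
      simp only [smul_mul_assoc, mul_smul_comm]
    rw [hmove]
    have hDsum : (1 / (C:ℝ)) • (∑ i ∈ Finset.Icc 1 C, D ^ i)
        = Matrix.diagonal hH.eigenvalues := by
      rw [hDdef]
      have h1 : ∑ i ∈ Finset.Icc 1 C, (Matrix.diagonal μ) ^ i
          = Matrix.diagonal (fun j => ∑ i ∈ Finset.Icc 1 C, μ j ^ i) := by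
        rw [Finset.sum_congr rfl (fun i _ => Matrix.diagonal_pow μ i)]
        ext a b
        simp only [Matrix.sum_apply]
        by_cases hab : a = b
        · subst hab; simp [Matrix.diagonal_apply_eq, Pi.pow_apply]
        · simp [Matrix.diagonal_apply_ne _ hab, hab]
      rw [h1]
      ext a b
      by_cases hab : a = b
      · subst hab
        have h2 := hμf a
        rw [hf] at h2
        simpa [Matrix.smul_apply, Matrix.diagonal_apply_eq, smul_eq_mul] using h2
      · simp [Matrix.smul_apply, Matrix.diagonal_apply_ne _ hab]
    rw [hDsum, ← hspecth]
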